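/- Let Q be the subalgebra of UT_4(F) of matrices with diagonal (a,b,b,c) and possibly nonzero entries in positions (1,2),(1,3),(1,4),(2,4),(3,4). Then Q is closed under the reflection involution θ_4 and the polynomial [x_1^-, x_2^-] x_3^- [x_4^-, x_5^-] is a *-polynomial identity of (Q, θ_4): for all A_1,...,A_5 ∈ Q skew with respect to θ_4, [A_1,A_2] A_3 [A_4,A_5] = 0. -/
import Mathlib

open Matrix

/-- The reflection involution `θ_4` on `M_4(F)`. -/
def reflInv {F : Type*} [Field F] (A : Matrix (Fin 4) (Fin 4) F) :
    Matrix (Fin 4) (Fin 4) F :=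
  Matrix.of fun i j => A j.rev i.rev

/-- Membership in the algebra `Q ⊆ UT_4(F)`: upper triangular, diagonal `(a,b,b,c)`
and entry `(2,3)` (1-indexed) equal to zero. -/
def memQ {F : Type*} [Field F] (M : Matrix (Fin 4) (Fin 4) F) : Prop :=
  (∀ i j : Fin 4, j < i → M i j = 0) ∧ M 1 1 = M 2 2 ∧ M 1 2 = 0

lemma skew_entries {F : Type*} [Field F] [CharZero F]
    (A : Matrix (Fin 4) (Fin 4) F) (hQ : memQ A) (hs : reflInv A = -A) :
    A 1 0 = 0 ∧ A 2 0 = 0 ∧ A 3 0 = 0 ∧ A 2 1 = 0 ∧ A 3 1 = 0 ∧ A 3 2 = 0 ∧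
    A 1 1 = 0 ∧ A 2 2 = 0 ∧ A 1 2 = 0 ∧ A 0 3 = 0 ∧
    A 3 3 = -A 0 0 ∧ A 1 3 = -A 0 2 ∧ A 2 3 = -A 0 1 := by
  obtain ⟨hlt, hd, h12⟩ := hQ
  have e : ∀ i j : Fin 4, A j.rev i.rev = -A i j := fun i j =>
    congrFun (congrFun hs i) j
  have e11 := e 1 1
  have e03 := e 0 3
  have e02 := e 0 2
  have e01 := e 0 1
  have e00 := e 0 0
  simp only [show (1:Fin 4).rev = 2 from rfl, show (0:Fin 4).rev = 3 from rfl,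
    show (2:Fin 4).rev = 1 from rfl, show (3:Fin 4).rev = 0 from rfl] at e11 e03 e02 e01 e00
  refine ⟨hlt 1 0 (by decide), hlt 2 0 (by decide), hlt 3 0 (by decide),
    hlt 2 1 (by decide), hlt 3 1 (by decide), hlt 3 2 (by decide), ?_, ?_, h12,
    ?_, e00, ?_, ?_⟩
  · exact add_self_eq_zero.mp (by linear_combination hd + e11)
  · exact add_self_eq_zero.mp (by linear_combination e11 - hd)
  · exact add_self_eq_zero.mp (by linear_combination e03)
  · exact e02
  · exact e01

set_option maxHeartbeats 2000000 in
/-- `Q` is closed under `θ_4` and `[x₁⁻, x₂⁻] x₃⁻ [x₄⁻, x₅⁻]` is a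
`*`-polynomial identity of `(Q, θ_4)`. -/
theorem stmt_15 (F : Type*) [Field F] [CharZero F] :
    (∀ M : Matrix (Fin 4) (Fin 4) F, memQ M → memQ (reflInv M)) ∧
    (∀ A₁ A₂ A₃ A₄ A₅ : Matrix (Fin 4) (Fin 4) F,
      memQ A₁ → memQ A₂ → memQ A₃ → memQ A₄ → memQ A₅ →
      reflInv A₁ = -A₁ → reflInv A₂ = -A₂ → reflInv A₃ = -A₃ →
      reflInv A₄ = -A₄ → reflInv A₅ = -A₅ →
      (A₁ * A₂ - A₂ * A₁) * A₃ * (A₄ * A₅ - A₅ * A₄) = 0) := by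
  constructor
  · rintro M ⟨hlt, hd, h12⟩
    refine ⟨fun i j hij => ?_, ?_, ?_⟩
    · apply hlt
      simpa using Fin.rev_lt_rev.mpr hij
    · show M (1:Fin 4).rev (1:Fin 4).rev = M (2:Fin 4).rev (2:Fin 4).rev
      simp only [show (1:Fin 4).rev = 2 from rfl, show (2:Fin 4).rev = 1 from rfl]
      exact hd.symm
    · show M (2:Fin 4).rev (1:Fin 4).rev = 0
      simp only [show (1:Fin 4).rev = 2 from rfl, show (2:Fin 4).rev = 1 from rfl]
      exact h12
  · intro A₁ A₂ A₃ A₄ A₅ h1 h2 h3 h4 h5 s1 s2 s3 s4 s5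
    obtain ⟨a1,b1,c1,d1,e1,f1,g1,i1,j1,k1,l1,m1,n1⟩ := skew_entries A₁ h1 s1
    obtain ⟨a2,b2,c2,d2,e2,f2,g2,i2,j2,k2,l2,m2,n2⟩ := skew_entries A₂ h2 s2
    obtain ⟨a3,b3,c3,d3,e3,f3,g3,i3,j3,k3,l3,m3,n3⟩ := skew_entries A₃ h3 s3
    obtain ⟨a4,b4,c4,d4,e4,f4,g4,i4,j4,k4,l4,m4,n4⟩ := skew_entries A₄ h4 s4
    obtain ⟨a5,b5,c5,d5,e5,f5,g5,i5,j5,k5,l5,m5,n5⟩ := skew_entries A₅ h5 s5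
    ext i j
    fin_cases i <;> fin_cases j <;>
      simp [Matrix.mul_apply, Fin.sum_univ_four,
        a1,b1,c1,d1,e1,f1,g1,i1,j1,k1,l1,m1,n1,
        a2,b2,c2,d2,e2,f2,g2,i2,j2,k2,l2,m2,n2,
        a3,b3,c3,d3,e3,f3,g3,i3,j3,k3,l3,m3,n3,
        a4,b4,c4,d4,e4,f4,g4,i4,j4,k4,l4,m4,n4,
        a5,b5,c5,d5,e5,f5,g5,i5,j5,k5,l5,m5,n5] <;> first | ring1 | (left; left; ring1) | (right; ring1)
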